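/- Let t₁ < t₂ be real numbers and let p₁, p₂, q₁, q₂ : [t₁,t₂] → ℝ be continuous with p₁(t) > 0 and p₂(t) > 0 for all t ∈ [t₁,t₂]. Define the variation V(u) = ∫_{t₁}^{t₂} [(p₂(t) − p₁(t))(u'(t))² + (q₁(t) − q₂(t))(u(t))²] dt for u ∈ C¹[t₁,t₂]. Suppose there exists a nontrivial solution u of (p₂(t)u'(t))' + q₂(t)u(t) = 0 on (t₁,t₂) with u(t₁) = 0 = u(t₂) and V(u) ≥ 0. Then every real solution v of (p₁(t)v'(t))' + q₁(t)v(t) = 0 which is not a constant multiple of u has at least one zero in the open interval (t₁,t₂). -/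

import Mathlib

/-!
Picone's identity: where `v ≠ 0`,
`(p₁ v' u² / v)' = p₁ u'² - q₁ u² - p₁ (u' v - u v')² / v²`.
Suppose `v` has no zero in `(t₁, t₂)`. The boundary term `p₁ v' u² / v` tends to `0` at both
endpoints: `u` vanishes there, and where `v` vanishes too, `v'` does not (uniqueness for the
first-order system in `(v, p₁ v')`, as `v` is not `0 · u`), so `u / v` stays bounded.
Integrating by parts, `∫ (p₂ u'² - q₂ u²) = 0`, hence `∫ (p₁ u'² - q₁ u²) = -V(u) ≤ 0`, and the
identity forces `p₁ (u' v - u v')² / v² ≡ 0`. So the Wronskian of `u` and `v` vanishes, `u / v`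
is constant, and `v` is a constant multiple of `u`.
-/

/-- `x` is a solution of `(p(t) x'(t))' + q(t) x(t) = 0` on `[t₁, t₂]`:
`x` is continuously differentiable on `[t₁,t₂]`, `t ↦ p(t) x'(t)` is continuously
differentiable on `[t₁,t₂]`, and the equation holds for all `t ∈ [t₁,t₂]`. -/
def IsODESolution (t₁ t₂ : ℝ) (p q x : ℝ → ℝ) : Prop :=
  ContDiffOn ℝ 1 x (Set.Icc t₁ t₂) ∧
  ContDiffOn ℝ 1 (fun t => p t * derivWithin x (Set.Icc t₁ t₂) t) (Set.Icc t₁ t₂) ∧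
  ∀ t ∈ Set.Icc t₁ t₂,
    derivWithin (fun τ => p τ * derivWithin x (Set.Icc t₁ t₂) τ) (Set.Icc t₁ t₂) t
      + q t * x t = 0

/-- The variation `V(u) = ∫_{t₁}^{t₂} [(p₂ - p₁)(u')² + (q₁ - q₂) u²] dt`. -/
noncomputable def variation (t₁ t₂ : ℝ) (p₁ p₂ q₁ q₂ u : ℝ → ℝ) : ℝ :=
  ∫ t in t₁..t₂,
    ((p₂ t - p₁ t) * (derivWithin u (Set.Icc t₁ t₂) t) ^ 2
      + (q₁ t - q₂ t) * (u t) ^ 2)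

open Set Filter Topology MeasureTheory
open scoped NNReal

theorem exists_tendsto_div_of_hasDerivWithinAt {f g : ℝ → ℝ} {f' g' a : ℝ} {s : Set ℝ}
    (hf : HasDerivWithinAt f f' s a) (hg : HasDerivWithinAt g g' s a) (hfa : f a = 0)
    (hga : g a ≠ 0 ∨ g' ≠ 0) : ∃ L, Tendsto (fun x => f x / g x) (𝓝[s \ {a}] a) (𝓝 L) := by
  by_cases hg0 : g a = 0
  · refine ⟨f' / g', ?_⟩
    have hslope := ((hasDerivWithinAt_iff_tendsto_slope.1 hf).div
      (hasDerivWithinAt_iff_tendsto_slope.1 hg) (hga.resolve_left (not_not.2 hg0)))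
    refine hslope.congr' (eventually_nhdsWithin_of_forall fun x hx => ?_)
    have hxa : (x - a)⁻¹ ≠ 0 := inv_ne_zero (sub_ne_zero.2 hx.2)
    simp only [Pi.div_apply, slope, vsub_eq_sub, smul_eq_mul, hfa, hg0, sub_zero]
    exact mul_div_mul_left _ _ hxa
  · exact ⟨f a / g a, ((hf.continuousWithinAt.div hg.continuousWithinAt hg0).mono
      sdiff_subset).tendsto⟩

theorem continuousWithinAt_mul_sq_div {Q f g : ℝ → ℝ} {f' g' a : ℝ} {s : Set ℝ}
    (hQ : ContinuousWithinAt Q s a) (hf : HasDerivWithinAt f f' s a)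
    (hg : HasDerivWithinAt g g' s a) (hfa : f a = 0) (hga : g a ≠ 0 ∨ g' ≠ 0) :
    ContinuousWithinAt (fun x => Q x * f x ^ 2 / g x) s a := by
  obtain ⟨L, hL⟩ := exists_tendsto_div_of_hasDerivWithinAt hf hg hfa hga
  rw [← continuousWithinAt_sdiff_self, ContinuousWithinAt, hfa, zero_pow two_ne_zero, mul_zero,
    zero_div]
  have hlim := ((hQ.mono sdiff_subset).tendsto.mul
    (hf.continuousWithinAt.mono sdiff_subset).tendsto).mul hL
  rw [hfa, mul_zero, zero_mul] at hlim
  exact hlim.congr fun x => by ring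

theorem hasDerivAt_picone {Q u v : ℝ → ℝ} {p q u' v' x : ℝ} (hu : HasDerivAt u u' x)
    (hv : HasDerivAt v v' x) (hQ : HasDerivAt Q (-(q * v x)) x) (hQx : Q x = p * v')
    (hvx : v x ≠ 0) :
    HasDerivAt (fun t => Q t * u t ^ 2 / v t)
      (p * u' ^ 2 - q * u x ^ 2 - p * (u' * v x - u x * v') ^ 2 / v x ^ 2) x := by
  refine ((hQ.mul (hu.pow 2)).div hv hvx).congr_deriv ?_
  simp only [Pi.mul_apply, Pi.pow_apply, hQx]
  field_simp
  ring

theorem eqOn_zero_of_hasDerivAt_nonneg_of_apply_le {G g : ℝ → ℝ} {a b : ℝ}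
    (hG : ContinuousOn G (Icc a b)) (hGd : ∀ x ∈ Ioo a b, HasDerivAt G (g x) x)
    (hg : ∀ x ∈ Ioo a b, 0 ≤ g x) (hba : G b ≤ G a) : EqOn g 0 (Ioo a b) := by
  have hmono : MonotoneOn G (Icc a b) := by
    refine monotoneOn_of_deriv_nonneg (convex_Icc a b) hG ?_ ?_ <;> rw [interior_Icc]
    · exact fun x hx => (hGd x hx).differentiableAt.differentiableWithinAt
    · exact fun x hx => (hGd x hx).deriv ▸ hg x hx
  have hconst : ∀ y ∈ Icc a b, G y = G a := fun y hy =>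
    le_antisymm ((hmono hy (right_mem_Icc.2 (hy.1.trans hy.2)) hy.2).trans hba)
      (hmono (left_mem_Icc.2 (hy.1.trans hy.2)) hy hy.1)
  intro x hx
  exact (hGd x hx).unique <| (hasDerivAt_const x (G a)).congr_of_eventuallyEq <|
    eventually_of_mem (Icc_mem_nhds hx.1 hx.2) hconst

theorem exists_eqOn_const_mul_of_wronskian_eq_zero {u v u' v' : ℝ → ℝ} {a b : ℝ} (hab : a < b)
    (hu : ContinuousOn u (Icc a b)) (hv : ContinuousOn v (Icc a b))
    (hu' : ∀ x ∈ Ioo a b, HasDerivAt u (u' x) x) (hv' : ∀ x ∈ Ioo a b, HasDerivAt v (v' x) x)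
    (hv0 : ∀ x ∈ Ioo a b, v x ≠ 0) (hW : ∀ x ∈ Ioo a b, u' x * v x - u x * v' x = 0) :
    ∃ c, EqOn u (fun x => c * v x) (Icc a b) := by
  have hd : ∀ x ∈ Ioo a b, HasDerivAt (fun t => u t / v t) 0 x := fun x hx => by
    have h := (hu' x hx).div (hv' x hx) (hv0 x hx)
    rwa [hW x hx, zero_div] at h
  obtain ⟨c, hc⟩ := isOpen_Ioo.exists_is_const_of_deriv_eq_zero isPreconnected_Ioo
    (fun x hx => (hd x hx).differentiableAt.differentiableWithinAt) (fun x hx => (hd x hx).deriv)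
  refine ⟨c, EqOn.of_subset_closure (fun x hx => ?_) hu (continuousOn_const.mul hv)
    Ioo_subset_Icc_self (closure_Ioo hab.ne).ge⟩
  rw [← hc x hx, div_mul_cancel₀ _ (hv0 x hx)]

/-- The equation `(p x')' + q x = 0` as a first-order system in `y = (x, p x')`. -/
noncomputable def sturmLiouvilleField (p q : ℝ → ℝ) (t : ℝ) (y : ℝ × ℝ) : ℝ × ℝ :=
  (y.2 / p t, -(q t * y.1))

theorem lipschitzWith_sturmLiouvilleField {p q : ℝ → ℝ} {t : ℝ} {C : ℝ≥0} (hp : 0 < p t)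
    (hpC : (p t)⁻¹ ≤ C) (hqC : |q t| ≤ C) : LipschitzWith C (sturmLiouvilleField p q t) := by
  refine LipschitzWith.of_dist_le_mul fun y z => ?_
  simp only [sturmLiouvilleField, Prod.dist_eq, Real.dist_eq]
  refine max_le ?_ ?_
  · calc |y.2 / p t - z.2 / p t| = (p t)⁻¹ * |y.2 - z.2| := by
          rw [← sub_div, abs_div, abs_of_pos hp, div_eq_inv_mul]
      _ ≤ C * max |y.1 - z.1| |y.2 - z.2| :=
          mul_le_mul hpC (le_max_right _ _) (abs_nonneg _) C.2
  · calc |-(q t * y.1) - -(q t * z.1)| = |q t| * |y.1 - z.1| := by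
          rw [← abs_mul, ← abs_neg]; ring_nf
      _ ≤ C * max |y.1 - z.1| |y.2 - z.2| :=
          mul_le_mul hqC (le_max_left _ _) (abs_nonneg _) C.2

theorem ContDiffOn.continuousOn_energy {p q u : ℝ → ℝ} {t₁ t₂ : ℝ} (hu : ContDiffOn ℝ 1 u (Icc t₁ t₂))
    (ht : t₁ < t₂) (hp : ContinuousOn p (Icc t₁ t₂)) (hq : ContinuousOn q (Icc t₁ t₂)) :
    ContinuousOn (fun t => p t * derivWithin u (Icc t₁ t₂) t ^ 2 - q t * u t ^ 2) (Icc t₁ t₂) :=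
  (hp.mul ((hu.continuousOn_derivWithin (uniqueDiffOn_Icc ht) le_rfl).pow 2)).sub
    (hq.mul (hu.continuousOn.pow 2))

namespace IsODESolution

variable {t₁ t₂ t : ℝ} {p q x : ℝ → ℝ}

theorem hasDerivWithinAt (hx : IsODESolution t₁ t₂ p q x) (ht : t ∈ Icc t₁ t₂) :
    HasDerivWithinAt x (derivWithin x (Icc t₁ t₂) t) (Icc t₁ t₂) t :=
  (hx.1.differentiableOn one_ne_zero t ht).hasDerivWithinAt

theorem hasDerivWithinAt_flux (hx : IsODESolution t₁ t₂ p q x) (ht : t ∈ Icc t₁ t₂) :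
    HasDerivWithinAt (fun τ => p τ * derivWithin x (Icc t₁ t₂) τ) (-(q t * x t)) (Icc t₁ t₂) t := by
  rw [← eq_neg_of_add_eq_zero_left (hx.2.2 t ht)]
  exact (hx.2.1.differentiableOn one_ne_zero t ht).hasDerivWithinAt

theorem hasDerivAt (hx : IsODESolution t₁ t₂ p q x) (ht : t ∈ Ioo t₁ t₂) :
    HasDerivAt x (derivWithin x (Icc t₁ t₂) t) t :=
  (hx.hasDerivWithinAt (Ioo_subset_Icc_self ht)).hasDerivAt (Icc_mem_nhds ht.1 ht.2)

theorem hasDerivAt_flux (hx : IsODESolution t₁ t₂ p q x) (ht : t ∈ Ioo t₁ t₂) :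
    HasDerivAt (fun τ => p τ * derivWithin x (Icc t₁ t₂) τ) (-(q t * x t)) t :=
  (hx.hasDerivWithinAt_flux (Ioo_subset_Icc_self ht)).hasDerivAt (Icc_mem_nhds ht.1 ht.2)

theorem hasDerivWithinAt_sturmLiouvilleField (hx : IsODESolution t₁ t₂ p q x)
    (ht : t ∈ Icc t₁ t₂) (hp : p t ≠ 0) :
    HasDerivWithinAt (fun τ => (x τ, p τ * derivWithin x (Icc t₁ t₂) τ))
      (sturmLiouvilleField p q t (x t, p t * derivWithin x (Icc t₁ t₂) t)) (Icc t₁ t₂) t := by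
  rw [sturmLiouvilleField, mul_div_cancel_left₀ _ hp]
  exact (hx.hasDerivWithinAt ht).prodMk (hx.hasDerivWithinAt_flux ht)

theorem eqOn_zero_of_eq_zero_of_derivWithin_eq_zero (hx : IsODESolution t₁ t₂ p q x)
    (hp : ContinuousOn p (Icc t₁ t₂)) (hpos : ∀ t ∈ Icc t₁ t₂, 0 < p t)
    (hq : ContinuousOn q (Icc t₁ t₂)) {t₀ : ℝ} (ht₀ : t₀ ∈ Icc t₁ t₂) (h₀ : x t₀ = 0)
    (h₀' : derivWithin x (Icc t₁ t₂) t₀ = 0) : EqOn x 0 (Icc t₁ t₂) := by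
  obtain ⟨C, hC⟩ : ∃ C : ℝ≥0, ∀ t ∈ Icc t₁ t₂, LipschitzWith C (sturmLiouvilleField p q t) := by
    obtain ⟨C, hC⟩ := isCompact_Icc.exists_bound_of_continuousOn
      ((hp.inv₀ fun t ht => (hpos t ht).ne').prodMk hq)
    refine ⟨C.toNNReal, fun t ht => lipschitzWith_sturmLiouvilleField (hpos t ht) ?_ ?_⟩ <;>
    · have hCt := (hC t ht).trans (Real.le_coe_toNNReal C)
      simp only [Prod.norm_def, max_le_iff, Real.norm_eq_abs, Pi.inv_apply] at hCt
      linarith [le_abs_self (p t)⁻¹]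
  set y := fun τ => (x τ, p τ * derivWithin x (Icc t₁ t₂) τ)
  have hy (t) (ht : t ∈ Icc t₁ t₂) :=
    hx.hasDerivWithinAt_sturmLiouvilleField ht (hpos t ht).ne'
  have hyc : ContinuousOn y (Icc t₁ t₂) := hx.1.continuousOn.prodMk hx.2.1.continuousOn
  have hzero (t : ℝ) (s : Set ℝ) :
      HasDerivWithinAt (fun _ => (0 : ℝ × ℝ)) (sturmLiouvilleField p q t 0) s t := by
    rw [show sturmLiouvilleField p q t 0 = 0 by simp [sturmLiouvilleField]]
    exact hasDerivWithinAt_const t s 0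
  have hy₀ : y t₀ = 0 := by simp [y, h₀, h₀']
  have hy0 : EqOn y 0 (Icc t₁ t₂) := by
    rw [← Icc_union_Icc_eq_Icc ht₀.1 ht₀.2]
    refine EqOn.union ?_ ?_
    · exact ODE_solution_unique_of_mem_Icc_left (s := fun _ => univ)
        (fun t ht => (hC t ⟨ht.1.le, ht.2.trans ht₀.2⟩).lipschitzOnWith)
        (hyc.mono (Icc_subset_Icc_right ht₀.2))
        (fun t ht => (hy t ⟨ht.1.le, ht.2.trans ht₀.2⟩).mono_of_mem_nhdsWithin
          (Icc_mem_nhdsLE_of_mem ⟨ht.1, ht.2.trans ht₀.2⟩))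
        (fun _ _ => mem_univ _) continuousOn_const (fun t _ => hzero t _)
        (fun _ _ => mem_univ _) hy₀
    · exact ODE_solution_unique_of_mem_Icc_right (s := fun _ => univ)
        (fun t ht => (hC t ⟨ht₀.1.trans ht.1, ht.2.le⟩).lipschitzOnWith)
        (hyc.mono (Icc_subset_Icc_left ht₀.1))
        (fun t ht => (hy t ⟨ht₀.1.trans ht.1, ht.2.le⟩).mono_of_mem_nhdsWithin
          (Icc_mem_nhdsGE_of_mem ⟨ht₀.1.trans ht.1, ht.2⟩))
        (fun _ _ => mem_univ _) continuousOn_const (fun t _ => hzero t _)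
        (fun _ _ => mem_univ _) hy₀
  exact fun t ht => congrArg Prod.fst (hy0 ht)

theorem continuousOn_q_mul (hx : IsODESolution t₁ t₂ p q x) (ht : t₁ < t₂) :
    ContinuousOn (fun t => q t * x t) (Icc t₁ t₂) :=
  (hx.2.1.continuousOn_derivWithin (uniqueDiffOn_Icc ht) le_rfl).neg.congr fun t ht =>
    eq_neg_of_add_eq_zero_right (hx.2.2 t ht)

theorem continuousOn_energy (hx : IsODESolution t₁ t₂ p q x) (ht : t₁ < t₂) :
    ContinuousOn (fun t => p t * derivWithin x (Icc t₁ t₂) t ^ 2 - q t * x t ^ 2) (Icc t₁ t₂) :=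
  ((hx.2.1.continuousOn.mul (hx.1.continuousOn_derivWithin (uniqueDiffOn_Icc ht) le_rfl)).sub
    ((hx.continuousOn_q_mul ht).mul hx.1.continuousOn)).congr fun t _ => by
      simp only [Pi.mul_apply, Pi.sub_apply]; ring

theorem integral_energy_eq_zero (hx : IsODESolution t₁ t₂ p q x) (ht : t₁ < t₂)
    (h₁ : x t₁ = 0) (h₂ : x t₂ = 0) :
    ∫ t in t₁..t₂, (p t * derivWithin x (Icc t₁ t₂) t ^ 2 - q t * x t ^ 2) = 0 := by
  have hd : ∀ t ∈ Ioo t₁ t₂, HasDerivAt (fun τ => p τ * derivWithin x (Icc t₁ t₂) τ * x τ)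
      (p t * derivWithin x (Icc t₁ t₂) t ^ 2 - q t * x t ^ 2) t := fun t ht =>
    ((hx.hasDerivAt_flux ht).mul (hx.hasDerivAt ht)).congr_deriv (by ring)
  rw [intervalIntegral.integral_eq_sub_of_hasDerivAt_of_le ht.le
    (hx.2.1.continuousOn.mul hx.1.continuousOn) hd
    ((hx.continuousOn_energy ht).intervalIntegrable_of_Icc ht.le)]
  simp [h₁, h₂]

theorem wronskian_eq_zero_of_integral_nonpos (hx : IsODESolution t₁ t₂ p q x) (ht : t₁ < t₂)
    (hp : ContinuousOn p (Icc t₁ t₂)) (hpos : ∀ t ∈ Icc t₁ t₂, 0 < p t)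
    (hq : ContinuousOn q (Icc t₁ t₂)) (hx0 : ∀ t ∈ Ioo t₁ t₂, x t ≠ 0)
    (hend : ∀ t ∈ Icc t₁ t₂, x t ≠ 0 ∨ derivWithin x (Icc t₁ t₂) t ≠ 0) {u : ℝ → ℝ}
    (hu : ContDiffOn ℝ 1 u (Icc t₁ t₂)) (hu₁ : u t₁ = 0) (hu₂ : u t₂ = 0)
    (hJ : ∫ t in t₁..t₂, (p t * derivWithin u (Icc t₁ t₂) t ^ 2 - q t * u t ^ 2) ≤ 0) :
    ∀ t ∈ Ioo t₁ t₂,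
      derivWithin u (Icc t₁ t₂) t * x t - u t * derivWithin x (Icc t₁ t₂) t = 0 := by
  set X := derivWithin x (Icc t₁ t₂)
  set U := derivWithin u (Icc t₁ t₂)
  set e := fun t => p t * U t ^ 2 - q t * u t ^ 2
  set g := fun t => p t * (U t * x t - u t * X t) ^ 2 / x t ^ 2
  set F := fun t => p t * X t * u t ^ 2 / x t
  have he : ContinuousOn e (Icc t₁ t₂) := hu.continuousOn_energy ht hp hq
  have hUd (t) (ht : t ∈ Icc t₁ t₂) : HasDerivWithinAt u (U t) (Icc t₁ t₂) t :=
    (hu.differentiableOn one_ne_zero t ht).hasDerivWithinAt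
  have hFd (t) (ht : t ∈ Ioo t₁ t₂) : HasDerivAt F (e t - g t) t :=
    hasDerivAt_picone ((hUd t (Ioo_subset_Icc_self ht)).hasDerivAt (Icc_mem_nhds ht.1 ht.2))
      (hx.hasDerivAt ht) (hx.hasDerivAt_flux ht) rfl (hx0 t ht)
  have hFc : ContinuousOn F (Icc t₁ t₂) := by
    intro t ht
    obtain rfl | rfl | hI := eq_endpoints_or_mem_Ioo_of_mem_Icc ht
    · exact continuousWithinAt_mul_sq_div (hx.2.1.continuousOn t ht) (hUd t ht)
        (hx.hasDerivWithinAt ht) hu₁ (hend t ht)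
    · exact continuousWithinAt_mul_sq_div (hx.2.1.continuousOn t ht) (hUd t ht)
        (hx.hasDerivWithinAt ht) hu₂ (hend t ht)
    · exact (hFd t hI).continuousAt.continuousWithinAt
  set G := fun s => (∫ τ in t₁..s, e τ) - F s
  have hGc : ContinuousOn G (Icc t₁ t₂) := by
    have hE := intervalIntegral.continuousOn_primitive_interval (μ := volume) (a := t₁) (b := t₂)
      (by rw [uIcc_of_le ht.le]; exact he.integrableOn_Icc)
    rw [uIcc_of_le ht.le] at hE
    exact hE.sub hFc
  have hGd (t) (ht : t ∈ Ioo t₁ t₂) : HasDerivAt G (g t) t := by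
    have hE := intervalIntegral.integral_hasDerivAt_right
      ((he.mono (Icc_subset_Icc_right ht.2.le)).intervalIntegrable_of_Icc ht.1.le)
      ((he.mono Ioo_subset_Icc_self).stronglyMeasurableAtFilter isOpen_Ioo t ht)
      ((he t (Ioo_subset_Icc_self ht)).continuousAt (Icc_mem_nhds ht.1 ht.2))
    exact (hE.sub (hFd t ht)).congr_deriv (sub_sub_cancel _ _)
  have hG : G t₂ ≤ G t₁ := by simpa [G, F, hu₁, hu₂] using hJ
  -- `G` is monotone, as `G' = g ≥ 0`, yet `G t₂ ≤ G t₁`: so `G` is constant and `g = 0`.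
  have hg0 := eqOn_zero_of_hasDerivAt_nonneg_of_apply_le hGc hGd (fun t ht =>
    div_nonneg (mul_nonneg (hpos t (Ioo_subset_Icc_self ht)).le (sq_nonneg _)) (sq_nonneg _)) hG
  intro t ht
  simpa [g, (hpos t (Ioo_subset_Icc_self ht)).ne', hx0 t ht] using hg0 ht

end IsODESolution

theorem leighton_comparison_general
    (t₁ t₂ : ℝ) (ht : t₁ < t₂) (p₁ p₂ q₁ q₂ : ℝ → ℝ)
    (hp₁ : ContinuousOn p₁ (Set.Icc t₁ t₂))
    (hq₁ : ContinuousOn q₁ (Set.Icc t₁ t₂))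
    (hp₁pos : ∀ t ∈ Set.Icc t₁ t₂, 0 < p₁ t)
    (u : ℝ → ℝ) (hu : IsODESolution t₁ t₂ p₂ q₂ u)
    (hunt : ∃ t ∈ Set.Icc t₁ t₂, u t ≠ 0)
    (hu₁ : u t₁ = 0) (hu₂ : u t₂ = 0)
    (hV : 0 ≤ variation t₁ t₂ p₁ p₂ q₁ q₂ u)
    (v : ℝ → ℝ) (hv : IsODESolution t₁ t₂ p₁ q₁ v)
    (hvu : ¬ ∃ c : ℝ, ∀ t ∈ Set.Icc t₁ t₂, v t = c * u t) :
    ∃ t ∈ Set.Ioo t₁ t₂, v t = 0 := by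
  by_contra! hv0
  have hend (t₀) (ht₀ : t₀ ∈ Icc t₁ t₂) : v t₀ ≠ 0 ∨ derivWithin v (Icc t₁ t₂) t₀ ≠ 0 := by
    by_contra! h
    exact hvu ⟨0, fun t ht => by
      simpa using hv.eqOn_zero_of_eq_zero_of_derivWithin_eq_zero hp₁ hp₁pos hq₁ ht₀ h.1 h.2 ht⟩
  have hJ : ∫ t in t₁..t₂, (p₁ t * derivWithin u (Icc t₁ t₂) t ^ 2 - q₁ t * u t ^ 2) ≤ 0 := by
    have hdiff := intervalIntegral.integral_sub
      ((hu.continuousOn_energy ht).intervalIntegrable_of_Icc (μ := volume) ht.le)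
      ((hu.1.continuousOn_energy ht hp₁ hq₁).intervalIntegrable_of_Icc ht.le)
    have hVeq : variation t₁ t₂ p₁ p₂ q₁ q₂ u = _ :=
      (intervalIntegral.integral_congr fun t _ => by ring).trans hdiff
    linarith [hu.integral_energy_eq_zero ht hu₁ hu₂]
  obtain ⟨c, hc⟩ := exists_eqOn_const_mul_of_wronskian_eq_zero ht hu.1.continuousOn
    hv.1.continuousOn (fun _ => hu.hasDerivAt) (fun _ => hv.hasDerivAt) hv0
    (hv.wronskian_eq_zero_of_integral_nonpos ht hp₁ hp₁pos hq₁ hv0 hend hu.1 hu₁ hu₂ hJ)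
  obtain ⟨t₀, ht₀, hut₀⟩ := hunt
  have hc0 : c ≠ 0 := by
    rintro rfl
    exact hut₀ (by simpa using hc ht₀)
  exact hvu ⟨c⁻¹, fun t ht => by rw [hc ht, inv_mul_cancel_left₀ hc0]⟩

/-- **Leighton's comparison theorem.** -/
theorem leighton_comparison
    (t₁ t₂ : ℝ) (ht : t₁ < t₂) (p₁ p₂ q₁ q₂ : ℝ → ℝ)
    (hp₁ : ContinuousOn p₁ (Set.Icc t₁ t₂))
    (hp₂ : ContinuousOn p₂ (Set.Icc t₁ t₂))
    (hq₁ : ContinuousOn q₁ (Set.Icc t₁ t₂))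
    (hq₂ : ContinuousOn q₂ (Set.Icc t₁ t₂))
    (hp₁pos : ∀ t ∈ Set.Icc t₁ t₂, 0 < p₁ t)
    (hp₂pos : ∀ t ∈ Set.Icc t₁ t₂, 0 < p₂ t)
    (u : ℝ → ℝ) (hu : IsODESolution t₁ t₂ p₂ q₂ u)
    (hunt : ∃ t ∈ Set.Icc t₁ t₂, u t ≠ 0)
    (hu₁ : u t₁ = 0) (hu₂ : u t₂ = 0)
    (hV : 0 ≤ variation t₁ t₂ p₁ p₂ q₁ q₂ u)
    (v : ℝ → ℝ) (hv : IsODESolution t₁ t₂ p₁ q₁ v)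
    (hvu : ¬ ∃ c : ℝ, ∀ t ∈ Set.Icc t₁ t₂, v t = c * u t) :
    ∃ t ∈ Set.Ioo t₁ t₂, v t = 0 :=
  leighton_comparison_general t₁ t₂ ht p₁ p₂ q₁ q₂ hp₁ hq₁ hp₁pos u hu hunt hu₁ hu₂ hV v hv hvu
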